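/- The expected value of the last part of a uniformly random Arndt composition of n tends to √5 as n → ∞; that is, the real sequence d(n) / F_n tends to √5 as n → ∞. -/

import Mathlib

/-- `l` is a composition of `n`: a finite list of positive integers summing to `n`
(the empty list is the unique composition of `0`). -/
def IsComposition (n : ℕ) (l : List ℕ) : Prop :=
  (∀ x ∈ l, 0 < x) ∧ l.sum = n

/-- The Arndt condition: `σ_{2i-1} > σ_{2i}` (1-based) for every `i` with `2i ≤ ℓ`;
with 0-based indices, `l[2i] > l[2i+1]` whenever `2i+1 < l.length`. -/
def IsArndt (l : List ℕ) : Prop :=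
  ∀ i : ℕ, 2 * i + 1 < l.length → l.getD (2 * i + 1) 0 < l.getD (2 * i) 0

/-- `arndt n` is the number of Arndt compositions of `n`. -/
noncomputable def arndt (n : ℕ) : ℕ :=
  Set.ncard {l : List ℕ | IsComposition n l ∧ IsArndt l}

/-- `arndtParts n m` is the number of Arndt compositions of `n` with exactly `m` parts. -/
noncomputable def arndtParts (n m : ℕ) : ℕ :=
  Set.ncard {l : List ℕ | IsComposition n l ∧ IsArndt l ∧ l.length = m}

/-- The generalized binomial coefficient `C(a,b) = a(a-1)⋯(a-b+1)/b!` for an integer `a`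
and a natural number `b` (represented as a nonnegative integer); it is `0` for negative `b`. -/
def genChoose (a b : ℤ) : ℤ :=
  if 0 ≤ b then (∏ i ∈ Finset.range b.toNat, (a - (i : ℤ))) / (b.toNat.factorial : ℤ) else 0

/-- `lastSum n` is the sum of the last parts over all (nonempty) Arndt compositions of `n`
(the empty composition contributes `0`). -/
noncomputable def lastSum (n : ℕ) : ℕ :=
  ∑ᶠ l ∈ {l : List ℕ | IsComposition n l ∧ IsArndt l}, l.getLastD 0

/-!
Splitting off the first pair `(a, b)`, `a > b ≥ 1`, of an Arndt composition gives the convolution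
`d(n) = n + w(n) + ∑_{m<n} p(n-m) d(m)`, where `p(s) = ⌊(s-1)/2⌋` is the number of such pairs of
sum `s` and `w(s)` is the sum of their parts `b`. As `p(s+2) = p(s) + 1` for `s ≥ 1`, taking
differences twice turns it into `d(n+3) = d(n+2) + d(n+1) + [n even]`, so that
`d(n) = F(n+1) + F(n-1) - [n even]` for `n ≥ 1`. Hence
`d(n)/F(n) = 2 F(n+1)/F(n) - 1 + o(1) → 2φ - 1 = √5`.
-/

open Finset Filter Topology
open scoped goldenRatio

lemma isArndt_nil : IsArndt [] := by
  simp [IsArndt]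

lemma isArndt_singleton (a : ℕ) : IsArndt [a] := by
  simp [IsArndt]

lemma isArndt_cons_cons {a b : ℕ} {l : List ℕ} :
    IsArndt (a :: b :: l) ↔ b < a ∧ IsArndt l := by
  have shift (i : ℕ) : 2 * (i + 1) = 2 * i + 1 + 1 := by ring
  constructor
  · intro h
    refine ⟨by simpa using h 0 (by simp), fun i hi => ?_⟩
    simpa [shift] using h (i + 1) (by simp [shift, hi])
  · rintro ⟨hba, h⟩ (_ | i) hi
    · simpa using hba
    · simpa [shift] using h i (by simpa [shift] using hi)

def arndtPairs (s : ℕ) : Finset (ℕ × ℕ) :=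
  (Ico 1 ((s + 1) / 2)).image fun b => (s - b, b)

lemma injective_sub_pair (s : ℕ) : Function.Injective fun b : ℕ => (s - b, b) :=
  fun _ _ => congrArg Prod.snd

lemma mem_arndtPairs {s a b : ℕ} : (a, b) ∈ arndtPairs s ↔ b < a ∧ 0 < b ∧ a + b = s := by
  simp only [arndtPairs, mem_image, mem_Ico, Prod.mk.injEq]
  constructor
  · rintro ⟨b, hb, rfl, rfl⟩
    omega
  · rintro ⟨hba, hb, rfl⟩
    exact ⟨b, by omega, by omega, rfl⟩

lemma card_arndtPairs (s : ℕ) : #(arndtPairs s) = (s - 1) / 2 := by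
  rw [arndtPairs, card_image_of_injective _ (injective_sub_pair s), Nat.card_Ico]
  omega

lemma sum_snd_arndtPairs_add_two (s : ℕ) :
    ∑ ab ∈ arndtPairs (s + 2), ab.2 = ∑ ab ∈ arndtPairs s, ab.2 + (s + 1) / 2 := by
  simp only [arndtPairs, sum_image fun _ _ _ _ h => injective_sub_pair _ h]
  rw [show (s + 2 + 1) / 2 = (s + 1) / 2 + 1 by omega]
  rcases s.eq_zero_or_pos with rfl | hs
  · rfl
  · exact sum_Ico_succ_top (by omega) id

def consPairs (P : Finset (ℕ × ℕ)) (A : Finset (List ℕ)) : Finset (List ℕ) :=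
  (P ×ˢ A).image fun x => x.1.1 :: x.1.2 :: x.2

lemma mem_consPairs {P : Finset (ℕ × ℕ)} {A : Finset (List ℕ)} {a b : ℕ} {r : List ℕ} :
    a :: b :: r ∈ consPairs P A ↔ (a, b) ∈ P ∧ r ∈ A := by
  simp [consPairs, and_assoc]

lemma drop_two_mem_of_mem_consPairs {P : Finset (ℕ × ℕ)} {A : Finset (List ℕ)} {l : List ℕ}
    (hl : l ∈ consPairs P A) : l.drop 2 ∈ A := by
  obtain ⟨⟨ab, r⟩, hr, rfl⟩ := mem_image.mp hl
  exact (mem_product.mp hr).2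

lemma sum_consPairs {M : Type*} [AddCommMonoid M] (P : Finset (ℕ × ℕ)) (A : Finset (List ℕ))
    (f : List ℕ → M) :
    ∑ l ∈ consPairs P A, f l = ∑ ab ∈ P, ∑ r ∈ A, f (ab.1 :: ab.2 :: r) := by
  rw [consPairs, sum_image fun x _ y _ h => by simpa [Prod.ext_iff, and_assoc] using h,
    sum_product]

def arndtCompositions : ℕ → Finset (List ℕ)
  | 0 => {[]}
  | n + 1 => insert [n + 1] <| (range (n + 1)).attach.biUnion fun m =>
      consPairs (arndtPairs (n + 1 - m)) (arndtCompositions m)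
  decreasing_by exact mem_range.mp m.2

lemma mem_arndtCompositions {n : ℕ} {l : List ℕ} :
    l ∈ arndtCompositions n ↔ IsComposition n l ∧ IsArndt l := by
  induction n using Nat.strong_induction_on generalizing l with
  | _ n ih =>
  rcases n with _ | n
  · rcases l with _ | ⟨a, l⟩
    · simp [arndtCompositions, IsComposition, isArndt_nil]
    · simp [arndtCompositions, IsComposition]
      omega
  rcases l with _ | ⟨a, _ | ⟨b, r⟩⟩
  · simp [arndtCompositions, IsComposition, consPairs]
  · simp +contextual [arndtCompositions, IsComposition, isArndt_singleton, eq_comm, consPairs]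
  · simp only [arndtCompositions, mem_insert, List.cons.injEq, reduceCtorEq, and_false, false_or,
      mem_biUnion, mem_attach, true_and, mem_consPairs, Subtype.exists, mem_range,
      IsComposition, List.forall_mem_cons, List.sum_cons, isArndt_cons_cons, mem_arndtPairs]
    constructor
    · rintro ⟨m, hm, ⟨hba, hb, hab⟩, hr⟩
      obtain ⟨⟨hpos, rfl⟩, har⟩ := (ih m hm).mp hr
      exact ⟨⟨⟨by omega, hb, hpos⟩, by omega⟩, hba, har⟩
    · rintro ⟨⟨⟨-, hb, hpos⟩, hsum⟩, hba, har⟩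
      exact ⟨r.sum, by omega, ⟨hba, hb, by omega⟩, (ih _ (by omega)).mpr ⟨⟨hpos, rfl⟩, har⟩⟩

lemma lastSum_eq_sum (n : ℕ) : lastSum n = ∑ l ∈ arndtCompositions n, l.getLastD 0 := by
  have h : {l : List ℕ | IsComposition n l ∧ IsArndt l} = ↑(arndtCompositions n) := by
    ext l
    simp [mem_arndtCompositions]
  rw [lastSum, h, finsum_mem_coe_finset]

lemma lastSum_zero : lastSum 0 = 0 := by
  simp [lastSum_eq_sum, arndtCompositions]

lemma sum_getLastD_arndtCompositions (m b : ℕ) :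
    ∑ r ∈ arndtCompositions m, r.getLastD b = if m = 0 then b else lastSum m := by
  rcases m with _ | m
  · simp [arndtCompositions]
  rw [if_neg m.succ_ne_zero, lastSum_eq_sum]
  refine sum_congr rfl fun r hr => ?_
  obtain ⟨⟨-, hsum⟩, -⟩ := mem_arndtCompositions.mp hr
  rcases r with _ | ⟨x, t⟩
  · simp at hsum
  · simp only [List.getLastD_cons]

lemma lastSum_eq_convolution (n : ℕ) : lastSum n =
    n + ∑ ab ∈ arndtPairs n, ab.2 + ∑ m ∈ range n, #(arndtPairs (n - m)) * lastSum m := by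
  rcases n with _ | n
  · simp [lastSum_zero, arndtPairs]
  have single_notMem : [n + 1] ∉ (range (n + 1)).attach.biUnion fun m =>
      consPairs (arndtPairs (n + 1 - m)) (arndtCompositions m) := by
    simp [consPairs]
  have disjoint : ((range (n + 1)).attach : Set {m // m ∈ range (n + 1)}).PairwiseDisjoint
      fun m => consPairs (arndtPairs (n + 1 - m)) (arndtCompositions m) := by
    intro m _ m' _ hmm'
    refine disjoint_left.mpr fun l hl hl' => hmm' (Subtype.ext ?_)
    obtain ⟨⟨-, hm⟩, -⟩ := mem_arndtCompositions.mp (drop_two_mem_of_mem_consPairs hl)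
    obtain ⟨⟨-, hm'⟩, -⟩ := mem_arndtCompositions.mp (drop_two_mem_of_mem_consPairs hl')
    rw [← hm, ← hm']
  have inner (m s : ℕ) : ∑ ab ∈ arndtPairs s, (if m = 0 then ab.2 else lastSum m) =
      (if m = 0 then ∑ ab ∈ arndtPairs s, ab.2 else 0) + #(arndtPairs s) * lastSum m := by
    split_ifs with hm <;> simp [hm, lastSum_zero]
  rw [lastSum_eq_sum, arndtCompositions, sum_insert single_notMem, sum_biUnion disjoint,
    sum_attach (range (n + 1)) fun m => ∑ l ∈ consPairs (arndtPairs (n + 1 - m))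
      (arndtCompositions m), l.getLastD 0]
  simp only [sum_consPairs, List.getLastD_cons, sum_getLastD_arndtCompositions, inner,
    sum_add_distrib, sum_ite_eq', mem_range]
  simp [add_assoc]

lemma lastSum_add_two (n : ℕ) :
    lastSum (n + 2) = lastSum n + 2 + (n + 1) / 2 + ∑ m ∈ range n, lastSum m := by
  have convolution : ∑ m ∈ range (n + 2), #(arndtPairs (n + 2 - m)) * lastSum m =
      ∑ m ∈ range n, #(arndtPairs (n - m)) * lastSum m + ∑ m ∈ range n, lastSum m := by
    rw [sum_range_succ, sum_range_succ, ← sum_add_distrib]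
    simp only [card_arndtPairs, show (n + 2 - (n + 1) - 1) / 2 = 0 by omega,
      show (n + 2 - n - 1) / 2 = 0 by omega, zero_mul, add_zero]
    refine sum_congr rfl fun m hm => ?_
    rw [show (n + 2 - m - 1) / 2 = (n - m - 1) / 2 + 1 by grind]
    ring
  rw [lastSum_eq_convolution (n + 2), lastSum_eq_convolution n, sum_snd_arndtPairs_add_two,
    convolution]
  ring

lemma lastSum_add_three (n : ℕ) :
    lastSum (n + 3) = lastSum (n + 2) + lastSum (n + 1) + (n + 1) % 2 := by
  have h₀ := lastSum_add_two n
  have h₁ : lastSum (n + 3) =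
      lastSum (n + 1) + 2 + (n + 2) / 2 + (∑ m ∈ range n, lastSum m + lastSum n) := by
    rw [← sum_range_succ]
    exact lastSum_add_two (n + 1)
  omega

lemma lastSum_succ_add_mod_two (n : ℕ) :
    lastSum (n + 1) + n % 2 = Nat.fib (n + 2) + Nat.fib n := by
  induction n using Nat.twoStepInduction with
  | zero => simp [lastSum_eq_convolution 1, arndtPairs, lastSum_zero]
  | one => simp [lastSum_add_two 0, lastSum_zero, Nat.fib_add_two]
  | more n ih₀ ih₁ =>
    simp only [add_assoc, Nat.reduceAdd] at ih₁ ⊢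
    have fib₂ : Nat.fib (n + 2) = Nat.fib n + Nat.fib (n + 1) := Nat.fib_add_two
    have fib₄ : Nat.fib (n + 4) = Nat.fib (n + 2) + Nat.fib (n + 3) := Nat.fib_add_two
    have := lastSum_add_three n
    omega

lemma lastSum_add_two_div_fib (n : ℕ) :
    (lastSum (n + 2) : ℝ) / Nat.fib (n + 2) =
      2 * (Nat.fib (n + 3) / Nat.fib (n + 2) : ℝ) - 1 - ((n + 1) % 2 : ℕ) / Nat.fib (n + 2) := by
  have closed : (lastSum (n + 2) : ℝ) + ((n + 1) % 2 : ℕ) =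
      Nat.fib (n + 3) + Nat.fib (n + 1) := by
    exact_mod_cast lastSum_succ_add_mod_two (n + 1)
  have fib₃ : (Nat.fib (n + 3) : ℝ) = Nat.fib (n + 1) + Nat.fib (n + 2) := by
    exact_mod_cast Nat.fib_add_two
  have fib_pos : (0 : ℝ) < Nat.fib (n + 2) := by exact_mod_cast Nat.fib_pos.mpr (by omega)
  field_simp
  linarith

lemma tendsto_mod_two_div_fib :
    Tendsto (fun n : ℕ => ((n + 1) % 2 : ℕ) / (Nat.fib (n + 2) : ℝ)) atTop (𝓝 0) := by
  have fib_tendsto : Tendsto (fun n => (Nat.fib (n + 2) : ℝ)) atTop atTop :=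
    tendsto_natCast_atTop_atTop.comp Nat.fib_add_two_strictMono.tendsto_atTop
  refine squeeze_zero (fun n => by positivity) (fun n => ?_)
    (tendsto_const_nhds (x := (1 : ℝ)).div_atTop fib_tendsto)
  gcongr
  exact_mod_cast Nat.le_of_lt_succ (Nat.mod_lt _ two_pos)

/-- the expected last part of a uniformly random Arndt composition of `n`
tends to `√5`, i.e. `d(n)/F_n → √5` as `n → ∞`. -/
theorem expected_last_part_asymptotic :
    Filter.Tendsto (fun n : ℕ => (lastSum n : ℝ) / (Nat.fib n : ℝ))
      Filter.atTop (nhds (Real.sqrt 5)) := by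
  rw [← tendsto_add_atTop_iff_nat 2]
  have ratio : Tendsto (fun n => (Nat.fib (n + 3) / Nat.fib (n + 2) : ℝ)) atTop (𝓝 φ) :=
    tendsto_fib_succ_div_fib_atTop.comp (tendsto_add_atTop_nat 2)
  have sqrt_five : √5 = 2 * φ - 1 - 0 := by
    linarith [Real.goldenRatio_sub_goldenConj, Real.goldenRatio_add_goldenConj]
  simp only [lastSum_add_two_div_fib]
  rw [sqrt_five]
  exact ((ratio.const_mul 2).sub_const 1).sub tendsto_mod_two_div_fib
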